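/- If g(U) = vec(U)ᵀ(C ⊗ C)vec(U) is convex on U(h,h), then for any fixed target weights h̄ ∈ R^n with positive entries summing to 1, the reduced GW barycenter problem min_{T ∈ U(h,h̄)} E(C, C̄(T), T) is a concave minimization problem and hence admits an extreme point of the transport polytope U(h,h̄) as an optimum. -/

import Mathlib

open Matrix BigOperators Kronecker

noncomputable def GWEnergy {N n : ℕ} (C : Matrix (Fin N) (Fin N) ℝ)
    (D : Matrix (Fin n) (Fin n) ℝ) (T : Matrix (Fin N) (Fin n) ℝ) : ℝ :=
  ∑ i, ∑ j, ∑ k, ∑ l, (C i j - D k l) ^ 2 * T i k * T j l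

noncomputable def colSum {N n : ℕ} (T : Matrix (Fin N) (Fin n) ℝ) (k : Fin n) : ℝ :=
  ∑ i, T i k

noncomputable def CbarOf {N n : ℕ} (C : Matrix (Fin N) (Fin N) ℝ)
    (T : Matrix (Fin N) (Fin n) ℝ) : Matrix (Fin n) (Fin n) ℝ :=
  Matrix.of fun k l =>
    if 0 < colSum T k * colSum T l then
      (∑ i, ∑ j, T i k * C i j * T j l) / (colSum T k * colSum T l)
    else 0

/-!
On `U(h, h̄)` the energy is `E(T) = ∑ C_ij² h_i h_j - g(Φ T)`, where `g(U) = vec(U)ᵀ (C ⊗ C) vec(U)`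
and `Φ T = T diag(h̄)⁻¹ Tᵀ` lies in `U(h, h)`. For `a + b = 1`,
`Φ(a T₀ + b T₁) + a b · (T₀ - T₁) diag(h̄)⁻¹ (T₀ - T₁)ᵀ = a Φ T₀ + b Φ T₁`,
and the bilinear form of `g` is nonnegative on pairs `(X D Xᵀ, Y D' Yᵀ)` with `D, D'` nonnegative
diagonal, being a weighted sum of squares of the entries of `Xᵀ C Y`. Hence
`g(Φ(a T₀ + b T₁)) ≤ g(a Φ T₀ + b Φ T₁) ≤ a g(Φ T₀) + b g(Φ T₁)`, so `E` is concave.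
The minimizers of a continuous concave function on a compact convex set form a compact extreme
subset, which has an extreme point by Krein–Milman.
-/

open Finset

section Polytope

variable {m n : Type*} [Fintype m] [Fintype n]

def transportPolytope (h : m → ℝ) (hbar : n → ℝ) : Set (Matrix m n ℝ) :=
  {T | (∀ i j, 0 ≤ T i j) ∧ (∀ i, ∑ j, T i j = h i) ∧ ∀ k, ∑ i, T i k = hbar k}

theorem convex_transportPolytope (h : m → ℝ) (hbar : n → ℝ) :
    Convex ℝ (transportPolytope h hbar) := by
  rintro X ⟨hX, hXrow, hXcol⟩ Y ⟨hY, hYrow, hYcol⟩ a b ha hb hab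
  refine ⟨fun i j => ?_, fun i => ?_, fun k => ?_⟩
  · exact add_nonneg (mul_nonneg ha (hX i j)) (mul_nonneg hb (hY i j))
  · simp only [Matrix.add_apply, Matrix.smul_apply, smul_eq_mul, sum_add_distrib, ← mul_sum,
      hXrow, hYrow]
    rw [← add_mul, hab, one_mul]
  · simp only [Matrix.add_apply, Matrix.smul_apply, smul_eq_mul, sum_add_distrib, ← mul_sum,
      hXcol, hYcol]
    rw [← add_mul, hab, one_mul]

theorem isCompact_transportPolytope (h : m → ℝ) (hbar : n → ℝ) :
    IsCompact (transportPolytope h hbar) := by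
  have hclosed : IsClosed (transportPolytope h hbar) := by
    simp only [transportPolytope, Set.ofPred_and, Set.ofPred_forall]
    refine .inter (isClosed_iInter fun i => isClosed_iInter fun j => ?_)
      (.inter (isClosed_iInter fun i => ?_) (isClosed_iInter fun k => ?_))
    · exact isClosed_le continuous_const (by fun_prop)
    · exact isClosed_eq (by fun_prop) continuous_const
    · exact isClosed_eq (by fun_prop) continuous_const
  have hbox : transportPolytope h hbar ⊆
      Set.univ.pi fun i => Set.univ.pi fun _ => Set.Icc 0 (h i) := by
    rintro T ⟨hT, hrow, -⟩ i - k -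
    exact ⟨hT i k, hrow i ▸ single_le_sum (fun k _ => hT i k) (mem_univ k)⟩
  exact (isCompact_univ_pi fun i => isCompact_univ_pi fun _ => isCompact_Icc).of_isClosed_subset
    hclosed hbox

theorem transportPolytope_nonempty {h : m → ℝ} {hbar : n → ℝ} (hh : 0 ≤ h) (hhbar : 0 ≤ hbar)
    (hsum : ∑ i, h i = 1) (hbarsum : ∑ k, hbar k = 1) :
    (transportPolytope h hbar).Nonempty :=
  ⟨of fun i k => h i * hbar k, fun i k => mul_nonneg (hh i) (hhbar k),
    fun i => by simp [← mul_sum, hbarsum], fun k => by simp [← sum_mul, hsum]⟩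

end Polytope

instance Matrix.locallyConvexSpace {m n : Type*} : LocallyConvexSpace ℝ (Matrix m n ℝ) :=
  inferInstanceAs (LocallyConvexSpace ℝ (m → n → ℝ))

theorem ConcaveOn.exists_mem_extremePoints_isMinOn {E : Type*} [AddCommGroup E] [Module ℝ E]
    [TopologicalSpace E] [T2Space E] [IsTopologicalAddGroup E] [ContinuousSMul ℝ E]
    [LocallyConvexSpace ℝ E] {s : Set E} {f : E → ℝ} (hf : ConcaveOn ℝ s f)
    (hfc : ContinuousOn f s) (hs : IsCompact s) (hne : s.Nonempty) :
    ∃ x ∈ s.extremePoints ℝ, IsMinOn f s x := by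
  obtain ⟨x₀, hx₀, hmin⟩ := hs.exists_isMinOn hne hfc
  set F := s ∩ f ⁻¹' Set.Iic (f x₀)
  have hF : IsCompact F := hs.of_isClosed_subset
    (hfc.preimage_isClosed_of_isClosed hs.isClosed isClosed_Iic) Set.inter_subset_left
  have hFs : IsExtreme ℝ s F := by
    refine ⟨Set.inter_subset_left, fun x₁ hx₁ x₂ hx₂ x ⟨_, hfx⟩ hseg => ⟨hx₁, ?_⟩⟩
    exact (hf.left_le_of_le_right hx₁ hx₂ hseg (hfx.trans (hmin hx₂))).trans hfx
  obtain ⟨x, hx⟩ := hF.extremePoints_nonempty ⟨x₀, hx₀, le_refl (f x₀)⟩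
  exact ⟨x, hFs.extremePoints_subset_extremePoints hx,
    isMinOn_iff.2 fun y hy => (hx.1.2 : f x ≤ f x₀).trans (hmin hy)⟩

section KroneckerForm

variable {m n : Type*} [Fintype m] [Fintype n] [DecidableEq n]

def kronForm (C U V : Matrix m m ℝ) : ℝ :=
  ∑ p : m × m, ∑ q : m × m, U p.1 p.2 * (C ⊗ₖ C) p q * V q.1 q.2

def weightedGram (w : n → ℝ) (X : Matrix m n ℝ) : Matrix m m ℝ :=
  X * diagonal w * Xᵀ

theorem kronForm_eq_trace (C U V : Matrix m m ℝ) :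
    kronForm C U V = trace (Uᵀ * C * V * Cᵀ) := by
  simp only [kronForm, Fintype.sum_prod_type, kroneckerMap_apply, trace, diag_apply,
    mul_apply, transpose_apply, sum_mul]
  rw [sum_comm]
  refine sum_congr rfl fun _ _ => ?_
  rw [sum_comm, sum_comm_cycle]
  exact sum_congr rfl fun _ _ => sum_congr rfl fun _ _ => sum_congr rfl fun _ _ => by ring

theorem kronForm_add_self (C U V : Matrix m m ℝ) :
    kronForm C (U + V) (U + V) =
      kronForm C U U + (kronForm C U V + kronForm C V U) + kronForm C V V := by
  simp only [kronForm_eq_trace, transpose_add, Matrix.add_mul, Matrix.mul_add, trace_add]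
  ring

theorem kronForm_weightedGram (C : Matrix m m ℝ) (w v : n → ℝ) (X Y : Matrix m n ℝ) :
    kronForm C (weightedGram w X) (weightedGram v Y) =
      ∑ k, ∑ l, w k * v l * (Xᵀ * C * Y) k l ^ 2 := by
  have hcycle : trace ((weightedGram w X)ᵀ * C * weightedGram v Y * Cᵀ) =
      trace (diagonal w * (Xᵀ * C * Y) * diagonal v * (Xᵀ * C * Y)ᵀ) := by
    simp only [weightedGram, transpose_mul, transpose_transpose, diagonal_transpose,
      Matrix.mul_assoc]
    rw [trace_mul_comm]
    simp only [Matrix.mul_assoc]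
  rw [kronForm_eq_trace, hcycle]
  simp only [trace, diag_apply, mul_apply (M := diagonal w * _ * diagonal v), mul_diagonal,
    diagonal_mul, transpose_apply]
  exact sum_congr rfl fun k _ => sum_congr rfl fun l _ => by ring

theorem kronForm_weightedGram_nonneg (C : Matrix m m ℝ) {w v : n → ℝ} (hw : 0 ≤ w) (hv : 0 ≤ v)
    (X Y : Matrix m n ℝ) : 0 ≤ kronForm C (weightedGram w X) (weightedGram v Y) := by
  rw [kronForm_weightedGram]
  exact sum_nonneg fun k _ => sum_nonneg fun l _ =>
    mul_nonneg (mul_nonneg (hw k) (hv l)) (sq_nonneg _)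

theorem kronForm_weightedGram_le_add (C : Matrix m m ℝ) {w v : n → ℝ} (hw : 0 ≤ w) (hv : 0 ≤ v)
    (X Y : Matrix m n ℝ) :
    kronForm C (weightedGram w X) (weightedGram w X) ≤
      kronForm C (weightedGram w X + weightedGram v Y) (weightedGram w X + weightedGram v Y) := by
  rw [kronForm_add_self]
  have := kronForm_weightedGram_nonneg C hw hv X Y
  have := kronForm_weightedGram_nonneg C hv hw Y X
  have := kronForm_weightedGram_nonneg C hv hv Y Y
  linarith

omit [Fintype m] in
theorem weightedGram_add_weightedGram_sub (w : n → ℝ) (X Y : Matrix m n ℝ) {a b : ℝ}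
    (hab : a + b = 1) :
    weightedGram w (a • X + b • Y) + weightedGram ((a * b) • w) (X - Y) =
      a • weightedGram w X + b • weightedGram w Y := by
  obtain rfl : b = 1 - a := by linarith
  simp only [weightedGram, transpose_add, transpose_smul, transpose_sub, Matrix.add_mul,
    Matrix.mul_add, Matrix.sub_mul, Matrix.mul_sub, Matrix.smul_mul, Matrix.mul_smul,
    diagonal_smul]
  module

omit [Fintype m] in
theorem weightedGram_apply (w : n → ℝ) (X : Matrix m n ℝ) (i j : m) :
    weightedGram w X i j = ∑ k, w k * X i k * X j k := by
  rw [weightedGram, mul_apply]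
  simp only [mul_diagonal, transpose_apply]
  exact sum_congr rfl fun k _ => by ring

theorem weightedGram_mem_transportPolytope {h : m → ℝ} {hbar : n → ℝ}
    (hbarpos : ∀ k, 0 < hbar k) {T : Matrix m n ℝ} (hT : T ∈ transportPolytope h hbar) :
    weightedGram hbar⁻¹ T ∈ transportPolytope h h := by
  obtain ⟨hTnonneg, hrow, hcol⟩ := hT
  have hsum : ∀ i, ∑ j, weightedGram hbar⁻¹ T i j = h i := fun i => by
    simp only [weightedGram_apply]
    rw [sum_comm, ← hrow i]
    refine sum_congr rfl fun k _ => ?_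
    rw [← mul_sum, hcol k, Pi.inv_apply, mul_right_comm, inv_mul_cancel₀ (hbarpos k).ne',
      one_mul]
  refine ⟨fun i j => ?_, hsum, fun j => ?_⟩
  · rw [weightedGram_apply]
    exact sum_nonneg fun k _ =>
      mul_nonneg (mul_nonneg (inv_nonneg.2 (hbarpos k).le) (hTnonneg i k)) (hTnonneg j k)
  · simpa only [weightedGram_apply, mul_right_comm _ (T _ _) (T j _)] using hsum j

theorem continuous_kronForm_weightedGram (C : Matrix m m ℝ) (w : n → ℝ) :
    Continuous fun T : Matrix m n ℝ => kronForm C (weightedGram w T) (weightedGram w T) := by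
  simp only [kronForm, weightedGram]
  fun_prop

theorem convexOn_kronForm_weightedGram {C : Matrix m m ℝ} {h : m → ℝ} {hbar : n → ℝ}
    (hbarpos : ∀ k, 0 < hbar k)
    (hconv : ConvexOn ℝ (transportPolytope h h) fun U => kronForm C U U) :
    ConvexOn ℝ (transportPolytope h hbar)
      fun T => kronForm C (weightedGram hbar⁻¹ T) (weightedGram hbar⁻¹ T) := by
  refine ⟨convex_transportPolytope h hbar, fun T₀ hT₀ T₁ hT₁ a b ha hb hab => ?_⟩
  have hw : 0 ≤ hbar⁻¹ := fun k => inv_nonneg.2 (hbarpos k).le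
  have hab_w : 0 ≤ (a * b) • hbar⁻¹ := smul_nonneg (mul_nonneg ha hb) hw
  calc kronForm C (weightedGram hbar⁻¹ (a • T₀ + b • T₁)) (weightedGram hbar⁻¹ (a • T₀ + b • T₁))
      ≤ kronForm C (a • weightedGram hbar⁻¹ T₀ + b • weightedGram hbar⁻¹ T₁)
          (a • weightedGram hbar⁻¹ T₀ + b • weightedGram hbar⁻¹ T₁) := by
        rw [← weightedGram_add_weightedGram_sub hbar⁻¹ T₀ T₁ hab]
        exact kronForm_weightedGram_le_add C hw hab_w _ _
    _ ≤ _ := hconv.2 (weightedGram_mem_transportPolytope hbarpos hT₀)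
        (weightedGram_mem_transportPolytope hbarpos hT₁) ha hb hab

end KroneckerForm

theorem transpose_mul_mul_apply {m n : Type*} [Fintype m] (C : Matrix m m ℝ)
    (T : Matrix m n ℝ) (k l : n) : (Tᵀ * C * T) k l = ∑ i, ∑ j, T i k * C i j * T j l := by
  simp only [mul_apply, transpose_apply, sum_mul]
  exact sum_comm

section GromovWasserstein

variable {N n : ℕ}

theorem GWEnergy_eq_of_marginals (C : Matrix (Fin N) (Fin N) ℝ)
    (D : Matrix (Fin n) (Fin n) ℝ) {h : Fin N → ℝ} {hbar : Fin n → ℝ}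
    {T : Matrix (Fin N) (Fin n) ℝ} (hrow : ∀ i, ∑ k, T i k = h i)
    (hcol : ∀ k, ∑ i, T i k = hbar k) :
    GWEnergy C D T = ∑ i, ∑ j, C i j ^ 2 * h i * h j
      - 2 * ∑ k, ∑ l, D k l * (Tᵀ * C * T) k l + ∑ k, ∑ l, D k l ^ 2 * hbar k * hbar l := by
  have hmarg : ∀ {ι : Type} [Fintype ι] (c : ℝ) (x y : ι → ℝ),
      ∑ k, ∑ l, c * x k * y l = c * (∑ k, x k) * ∑ l, y l := fun c x y => by
    rw [mul_sum _ _ c, sum_mul_sum]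
  have hsq : ∑ i, ∑ j, ∑ k, ∑ l, C i j ^ 2 * T i k * T j l
      = ∑ i, ∑ j, C i j ^ 2 * h i * h j := by
    simp only [hmarg, hrow]
  have hcross : ∑ i, ∑ j, ∑ k, ∑ l, D k l * (T i k * C i j * T j l)
      = ∑ k, ∑ l, D k l * (Tᵀ * C * T) k l := by
    simp_rw [sum_comm (s := (univ : Finset (Fin N))) (t := (univ : Finset (Fin n)))]
    simp only [transpose_mul_mul_apply, mul_sum]
  have hsq' : ∑ i, ∑ j, ∑ k, ∑ l, D k l ^ 2 * T i k * T j l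
      = ∑ k, ∑ l, D k l ^ 2 * hbar k * hbar l := by
    simp_rw [sum_comm (s := (univ : Finset (Fin N))) (t := (univ : Finset (Fin n)))]
    simp only [hmarg, hcol]
  rw [← hsq, ← hcross, ← hsq']
  simp only [GWEnergy, mul_sum, ← sum_sub_distrib, ← sum_add_distrib]
  exact sum_congr rfl fun i _ => sum_congr rfl fun j _ => sum_congr rfl fun k _ =>
    sum_congr rfl fun l _ => by ring

theorem CbarOf_apply_of_colSum_eq {C : Matrix (Fin N) (Fin N) ℝ} {hbar : Fin n → ℝ}
    (hbarpos : ∀ k, 0 < hbar k) {T : Matrix (Fin N) (Fin n) ℝ}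
    (hcol : ∀ k, colSum T k = hbar k) (k l : Fin n) :
    CbarOf C T k l = (Tᵀ * C * T) k l / (hbar k * hbar l) := by
  rw [CbarOf, of_apply, hcol, hcol, if_pos (mul_pos (hbarpos k) (hbarpos l)),
    transpose_mul_mul_apply]

theorem GWEnergy_CbarOf_eq {C : Matrix (Fin N) (Fin N) ℝ} {h : Fin N → ℝ} {hbar : Fin n → ℝ}
    (hbarpos : ∀ k, 0 < hbar k) {T : Matrix (Fin N) (Fin n) ℝ}
    (hrow : ∀ i, ∑ k, T i k = h i) (hcol : ∀ k, ∑ i, T i k = hbar k) :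
    GWEnergy C (CbarOf C T) T = ∑ i, ∑ j, C i j ^ 2 * h i * h j
      - kronForm C (weightedGram hbar⁻¹ T) (weightedGram hbar⁻¹ T) := by
  have hne : ∀ k, hbar k ≠ 0 := fun k => (hbarpos k).ne'
  have hcross : ∀ k l, (Tᵀ * C * T) k l / (hbar k * hbar l) * (Tᵀ * C * T) k l
      = (hbar k)⁻¹ * (hbar l)⁻¹ * (Tᵀ * C * T) k l ^ 2 := fun k l => by
    field_simp
  have hsq : ∀ k l, ((Tᵀ * C * T) k l / (hbar k * hbar l)) ^ 2 * hbar k * hbar l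
      = (hbar k)⁻¹ * (hbar l)⁻¹ * (Tᵀ * C * T) k l ^ 2 := fun k l => by
    field_simp [hne k, hne l]
  rw [GWEnergy_eq_of_marginals C _ hrow hcol, kronForm_weightedGram]
  simp only [CbarOf_apply_of_colSum_eq hbarpos hcol, hcross, hsq, Pi.inv_apply]
  ring

end GromovWasserstein

/-- Corollary 1: if `g(U) = vec(U)ᵀ(C ⊗ C)vec(U)` is convex on `U(h,h)`, then for
fixed positive target weights `h̄`, `T ↦ E(C, C̄(T), T)` is concave on the transport
polytope `U(h,h̄)` and attains its minimum at an extreme point of `U(h,h̄)`. -/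
theorem GW_barycenter_fixed_weights_concave_extreme {N n : ℕ}
    (C : Matrix (Fin N) (Fin N) ℝ) (h : Fin N → ℝ) (hbar : Fin n → ℝ)
    (hpos : ∀ i, 0 < h i) (hsum : ∑ i, h i = 1)
    (hbarpos : ∀ k, 0 < hbar k) (hbarsum : ∑ k, hbar k = 1)
    (hconv : ConvexOn ℝ
      {U : Matrix (Fin N) (Fin N) ℝ |
        (∀ i j, 0 ≤ U i j) ∧ (∀ i, ∑ j, U i j = h i) ∧ ∀ j, ∑ i, U i j = h j}
      (fun U => ∑ p : Fin N × Fin N, ∑ q : Fin N × Fin N,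
        U p.1 p.2 * (C ⊗ₖ C) p q * U q.1 q.2)) :
    ConcaveOn ℝ
      {T : Matrix (Fin N) (Fin n) ℝ |
        (∀ i j, 0 ≤ T i j) ∧ (∀ i, ∑ j, T i j = h i) ∧ ∀ k, ∑ i, T i k = hbar k}
      (fun T => GWEnergy C (CbarOf C T) T) ∧
    ∃ T ∈ Set.extremePoints ℝ
        {T : Matrix (Fin N) (Fin n) ℝ |
          (∀ i j, 0 ≤ T i j) ∧ (∀ i, ∑ j, T i j = h i) ∧ ∀ k, ∑ i, T i k = hbar k},
      ∀ T' : Matrix (Fin N) (Fin n) ℝ,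
        ((∀ i j, 0 ≤ T' i j) ∧ (∀ i, ∑ j, T' i j = h i) ∧ ∀ k, ∑ i, T' i k = hbar k) →
        GWEnergy C (CbarOf C T) T ≤ GWEnergy C (CbarOf C T') T' := by
  set S := transportPolytope h hbar
  set g := fun T => kronForm C (weightedGram hbar⁻¹ T) (weightedGram hbar⁻¹ T)
  set c := ∑ i, ∑ j, C i j ^ 2 * h i * h j
  have hE : Set.EqOn (fun T => c - g T) (fun T => GWEnergy C (CbarOf C T) T) S :=
    fun T hT => (GWEnergy_CbarOf_eq hbarpos hT.2.1 hT.2.2).symm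
  have hg : ConvexOn ℝ S g := convexOn_kronForm_weightedGram hbarpos hconv
  have hconc : ConcaveOn ℝ S fun T => GWEnergy C (CbarOf C T) T :=
    ((concaveOn_const c hg.1).sub hg).congr hE
  have hcont : ContinuousOn (fun T => GWEnergy C (CbarOf C T) T) S :=
    (continuous_const.sub (continuous_kronForm_weightedGram C hbar⁻¹)).continuousOn.congr
      hE.symm
  obtain ⟨T, hT, hmin⟩ := hconc.exists_mem_extremePoints_isMinOn hcont
    (isCompact_transportPolytope h hbar)
    (transportPolytope_nonempty (fun i => (hpos i).le) (fun k => (hbarpos k).le) hsum hbarsum)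
  exact ⟨hconc, T, hT, fun T' hT' => hmin hT'⟩
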